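/- For 1 ≤ a ≤ r−2 with a+1 ∈ I, the signed permutation s_a c_I equals c_{I Δ {a}}, where Δ is symmetric difference; moreover s_{r−1} c_I = c_{I Δ {r−1}} for all I ⊆ {1,…,r−1} (with the convention c_∅ = w_0, where w_0(e_i) = −e_i for i < r and w_0(e_r) = e_r). -/

import Mathlib

noncomputable section

open Finset

/-- `ee r i` is the standard basis vector `e_i` (1-based index) of `ℝ^r`. -/
def ee (r i : ℕ) : Fin r → ℝ := fun j => if (j : ℕ) + 1 = i then 1 else 0

/-- The type-`D_r` simple roots, 1-based: `α_i = e_i - e_{i+1}` for `i ≤ r-1`,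
`α_r = e_{r-1} + e_r`. -/
def sroot (r i : ℕ) : Fin r → ℝ :=
  if i = r then ee r (r - 1) + ee r r else ee r i - ee r (i + 1)

/-- Root-poset order: `ρ ≤ η` iff `η - ρ` is a non-negative integer combination
of the simple roots. -/
def rootLE (r : ℕ) (ρ η : Fin r → ℝ) : Prop :=
  ∃ m : ℕ → ℕ, η - ρ = ∑ i ∈ Finset.Icc 1 r, (m i : ℝ) • sroot r i

/-- The positive roots of type `D_r`: `e_i ± e_j` for `1 ≤ i < j ≤ r`. -/
def Pos (r : ℕ) : Set (Fin r → ℝ) :=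
  {v | ∃ i j, 1 ≤ i ∧ i < j ∧ j ≤ r ∧ (v = ee r i - ee r j ∨ v = ee r i + ee r j)}

/-- The `i`-th (1-based) coordinate of a vector. -/
def coordN (r : ℕ) (x : Fin r → ℝ) (i : ℕ) : ℝ :=
  ∑ j : Fin r, if (j : ℕ) + 1 = i then x j else 0

/-- The successor map on `I ∪ {r}`: least element of `I ∪ {r}` larger than `a`. -/
def nextI (r : ℕ) (I : Finset ℕ) (a : ℕ) : ℕ :=
  WithTop.untopD r (((insert r I).filter (fun x => a < x)).min)

/-- `min (I ∪ {r})`; equals `min I` for nonempty `I ⊆ {1,…,r-1}` and `r` for `I = ∅`. -/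
def minI (r : ℕ) (I : Finset ℕ) : ℕ := WithTop.untopD r ((insert r I).min)

/-- `max I` (0 if empty). -/
def maxI (I : Finset ℕ) : ℕ := WithBot.unbotD 0 (I.max)

/-- The increasing cycle `p_I` on `I ∪ {r}`, fixing all other points. -/
def pI (r : ℕ) (I : Finset ℕ) (a : ℕ) : ℕ :=
  if a ∈ I then nextI r I a else if a = r then minI r I else a

/-- Images of the basis vectors under `c_I`. -/
def cIb (r : ℕ) (I : Finset ℕ) (j : ℕ) : Fin r → ℝ :=
  if j = r then ee r (minI r I) else -(ee r (pI r I j))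

/-- The signed permutation `c_I`, extended linearly; for `I = ∅` it is `w_0`. -/
def cI (r : ℕ) (I : Finset ℕ) (x : Fin r → ℝ) : Fin r → ℝ :=
  ∑ j ∈ Finset.Icc 1 r, coordN r x j • cIb r I j

/-- Images of the basis vectors under `d_I`. -/
def dIb (r : ℕ) (I : Finset ℕ) (j : ℕ) : Fin r → ℝ :=
  if j = maxI I then ee r r
  else if j = r then -(ee r (minI r I))
  else -(ee r (pI r I j))

/-- The signed permutation `d_I`, extended linearly. -/
def dI (r : ℕ) (I : Finset ℕ) (x : Fin r → ℝ) : Fin r → ℝ :=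
  ∑ j ∈ Finset.Icc 1 r, coordN r x j • dIb r I j

/-- The longest element `w_0` for `r` odd: `e_i ↦ -e_i` for `i < r`, `e_r ↦ e_r`. -/
def w0 (r : ℕ) (x : Fin r → ℝ) : Fin r → ℝ :=
  fun j => if (j : ℕ) + 1 = r then x j else -(x j)

/-- The set `A_I`. -/
def AI (r : ℕ) (I : Finset ℕ) : Set (Fin r → ℝ) :=
  {v | ∃ a b, a ∈ I ∧ a < b ∧ b < nextI r I a ∧ v = ee r b - ee r (nextI r I a)}

/-- The set `B_I`. -/
def BI (r : ℕ) (I : Finset ℕ) : Set (Fin r → ℝ) :=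
  {v | ∃ q, minI r I < q ∧ q ≤ r ∧ v = ee r (minI r I) - ee r q}

/-- `ν₀(u) = u(Π₊) ∩ Π₊`. -/
def nu0 (r : ℕ) (u : (Fin r → ℝ) → (Fin r → ℝ)) : Set (Fin r → ℝ) :=
  {β | β ∈ Pos r ∧ ∃ γ ∈ Pos r, u γ = β}

/-- Arrow `α → β` in the rationality graph of `u`: `u⁻¹(α) ≤ β`,
expressed via a positive preimage `γ` of `α`. -/
def Arrow (r : ℕ) (u : (Fin r → ℝ) → (Fin r → ℝ)) (α β : Fin r → ℝ) : Prop :=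
  ∃ γ ∈ Pos r, u γ = α ∧ rootLE r γ β

/-- The rationality graph of `u` has a directed cycle. -/
def HasCycle (r : ℕ) (u : (Fin r → ℝ) → (Fin r → ℝ)) : Prop :=
  ∃ (n : ℕ) (f : ℕ → (Fin r → ℝ)), 0 < n ∧ (∀ i ≤ n, f i ∈ nu0 r u) ∧
    f 0 = f n ∧ ∀ i < n, Arrow r u (f i) (f (i + 1))

/-- The simple reflection `s_a` for `1 ≤ a ≤ r-1`: swaps coordinates `a` and `a+1`. -/
def sw (r a : ℕ) (x : Fin r → ℝ) : Fin r → ℝ := fun j =>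
  if (j : ℕ) + 1 = a then coordN r x (a + 1)
  else if (j : ℕ) + 1 = a + 1 then coordN r x a
  else x j

/-- The spin reflection `s_r`: `e_{r-1} ↦ -e_r`, `e_r ↦ -e_{r-1}`. -/
def sSpin (r : ℕ) (x : Fin r → ℝ) : Fin r → ℝ := fun j =>
  if (j : ℕ) + 1 = r - 1 then -(coordN r x r)
  else if (j : ℕ) + 1 = r then -(coordN r x (r - 1))
  else x j

/-! ### Auxiliary lemmas -/

lemma coordN_eq (r : ℕ) (x : Fin r → ℝ) (i : ℕ) (h1 : 1 ≤ i) (h2 : i ≤ r) :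
    coordN r x i = x ⟨i - 1, by omega⟩ := by
  unfold coordN
  rw [Finset.sum_eq_single (⟨i - 1, by omega⟩ : Fin r)]
  · simp [Nat.sub_add_cancel h1]
  · intro b _ hb
    have hne : (b : ℕ) + 1 ≠ i := by
      intro h
      exact hb (Fin.ext (by simp; omega))
    simp [hne]
  · intro h; exact absurd (Finset.mem_univ _) h

lemma coordN_ee (r i k : ℕ) (h1 : 1 ≤ i) (h2 : i ≤ r) :
    coordN r (ee r k) i = if i = k then 1 else 0 := by
  rw [coordN_eq r _ i h1 h2]
  unfold ee
  have h : i - 1 + 1 = i := by omega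
  simp only [h]

/-- The transposition of `a` and `a+1`. -/
def sig (a k : ℕ) : ℕ := if k = a then a + 1 else if k = a + 1 then a else k

lemma sw_ee (r a k : ℕ) (h1 : 1 ≤ a) (h2 : a + 1 ≤ r) :
    sw r a (ee r k) = ee r (sig a k) := by
  funext j
  show (if (j : ℕ) + 1 = a then coordN r (ee r k) (a+1)
    else if (j : ℕ) + 1 = a + 1 then coordN r (ee r k) a else ee r k j) = _
  rw [coordN_ee r (a+1) k (by omega) h2, coordN_ee r a k h1 (by omega)]
  unfold ee sig
  split_ifs <;> first | rfl | omega

lemma coordN_smul (r : ℕ) (c : ℝ) (x : Fin r → ℝ) (i : ℕ) :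
    coordN r (c • x) i = c * coordN r x i := by
  unfold coordN
  rw [Finset.mul_sum]
  apply Finset.sum_congr rfl
  intro j _
  split_ifs <;> simp

lemma coordN_sum (r : ℕ) (s : Finset ℕ) (f : ℕ → Fin r → ℝ) (i : ℕ) :
    coordN r (∑ k ∈ s, f k) i = ∑ k ∈ s, coordN r (f k) i := by
  have h : ∀ j : Fin r, (if (j : ℕ) + 1 = i then (∑ k ∈ s, f k) j else 0)
      = ∑ k ∈ s, (if (j : ℕ) + 1 = i then f k j else 0) := by
    intro j
    rw [Finset.sum_apply]
    split_ifs <;> simp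
  simp only [coordN, h]
  exact Finset.sum_comm

lemma sw_smul (r a : ℕ) (c : ℝ) (x : Fin r → ℝ) :
    sw r a (c • x) = c • sw r a x := by
  funext j
  show (if (j : ℕ) + 1 = a then coordN r (c • x) (a+1)
    else if (j : ℕ) + 1 = a + 1 then coordN r (c • x) a else (c • x) j) = _
  simp only [coordN_smul, Pi.smul_apply, smul_eq_mul]
  show _ = c * (if (j : ℕ) + 1 = a then coordN r x (a+1)
    else if (j : ℕ) + 1 = a + 1 then coordN r x a else x j)
  split_ifs <;> rfl

lemma sw_neg (r a : ℕ) (x : Fin r → ℝ) : sw r a (-x) = -(sw r a x) := by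
  have h : (-x) = (-1 : ℝ) • x := by funext j; simp
  rw [h, sw_smul]
  funext j
  simp

lemma sw_sum (r a : ℕ) (s : Finset ℕ) (f : ℕ → Fin r → ℝ) :
    sw r a (∑ k ∈ s, f k) = ∑ k ∈ s, sw r a (f k) := by
  funext j
  have hsw : ∀ x : Fin r → ℝ, sw r a x j = (if (j : ℕ) + 1 = a then coordN r x (a+1)
    else if (j : ℕ) + 1 = a + 1 then coordN r x a else x j) := fun _ => rfl
  simp only [Finset.sum_apply, hsw, coordN_sum]
  split_ifs with h1 h2 <;> simp [Finset.sum_apply]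

/-! ### Characterizations of `nextI` and `minI` -/

lemma nextI_mem_lt (r : ℕ) (I : Finset ℕ) (a : ℕ) (ha : a < r) :
    nextI r I a ∈ insert r I ∧ a < nextI r I a := by
  have hne : ((insert r I).filter (fun x => a < x)).Nonempty :=
    ⟨r, by simp only [Finset.mem_filter]; exact ⟨Finset.mem_insert_self r I, ha⟩⟩
  have heq : nextI r I a = ((insert r I).filter (fun x => a < x)).min' hne := by
    unfold nextI
    rw [← Finset.coe_min' hne, WithTop.untopD_coe]
  rw [heq]
  have hmem := Finset.min'_mem _ hne
  simpa only [Finset.mem_filter] using hmem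

lemma nextI_le (r : ℕ) (I : Finset ℕ) (a b : ℕ) (hb : b ∈ insert r I) (hab : a < b) :
    nextI r I a ≤ b := by
  have hne : ((insert r I).filter (fun x => a < x)).Nonempty :=
    ⟨b, by simp only [Finset.mem_filter]; exact ⟨hb, hab⟩⟩
  have heq : nextI r I a = ((insert r I).filter (fun x => a < x)).min' hne := by
    unfold nextI
    rw [← Finset.coe_min' hne, WithTop.untopD_coe]
  rw [heq]
  exact Finset.min'_le _ b (by simp only [Finset.mem_filter]; exact ⟨hb, hab⟩)

lemma nextI_eq (r : ℕ) (I : Finset ℕ) (a m : ℕ) (ha : a < r) (hm : m ∈ insert r I)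
    (h1 : a < m) (h2 : ∀ b ∈ insert r I, a < b → m ≤ b) : nextI r I a = m := by
  obtain ⟨hmem, hlt⟩ := nextI_mem_lt r I a ha
  exact le_antisymm (nextI_le r I a m hm h1) (h2 _ hmem hlt)

lemma minI_mem (r : ℕ) (I : Finset ℕ) : minI r I ∈ insert r I := by
  have hne : (insert r I).Nonempty := ⟨r, Finset.mem_insert_self r I⟩
  have heq : minI r I = (insert r I).min' hne := by
    unfold minI
    rw [← Finset.coe_min' hne, WithTop.untopD_coe]
  rw [heq]
  exact Finset.min'_mem _ hne

lemma minI_le (r : ℕ) (I : Finset ℕ) (b : ℕ) (hb : b ∈ insert r I) : minI r I ≤ b := by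
  have hne : (insert r I).Nonempty := ⟨r, Finset.mem_insert_self r I⟩
  have heq : minI r I = (insert r I).min' hne := by
    unfold minI
    rw [← Finset.coe_min' hne, WithTop.untopD_coe]
  rw [heq]
  exact Finset.min'_le _ b hb

lemma minI_eq (r : ℕ) (I : Finset ℕ) (m : ℕ) (hm : m ∈ insert r I)
    (h : ∀ b ∈ insert r I, m ≤ b) : minI r I = m :=
  le_antisymm (minI_le r I m hm) (h _ (minI_mem r I))

/-! ### Key combinatorial lemmas -/

lemma key_min (r : ℕ) (I : Finset ℕ) (hI : I ⊆ Finset.Icc 1 (r - 1)) (a : ℕ)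
    (ha1 : 1 ≤ a) (ha2 : a ≤ r - 1) (hr : 5 ≤ r) (haI : a + 1 ∈ insert r I) :
    minI r (symmDiff I {a}) = sig a (minI r I) := by
  have har : a < r := by omega
  set I' := symmDiff I {a} with hI'def
  have hmemI' : ∀ b, b ∈ I' ↔ ((b ∈ I ∧ b ≠ a) ∨ (b = a ∧ a ∉ I)) := by
    intro b
    simp only [hI'def, Finset.mem_symmDiff, Finset.mem_singleton]
    constructor
    · rintro (⟨h1, h2⟩ | ⟨h1, h2⟩)
      · exact Or.inl ⟨h1, h2⟩
      · subst h1; exact Or.inr ⟨rfl, h2⟩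
    · rintro (⟨h1, h2⟩ | ⟨h1, h2⟩)
      · exact Or.inl ⟨h1, h2⟩
      · subst h1; exact Or.inr ⟨rfl, h2⟩
  have hIr : ∀ b ∈ I, b < r := fun b hb => by
    have := hI hb; simp only [Finset.mem_Icc] at this; omega
  set m := minI r I with hm
  have hmmem : m ∈ insert r I := minI_mem r I
  have hmr : m ≤ r := minI_le r I r (Finset.mem_insert_self r I)
  by_cases haIn : a ∈ I
  · have hma : m ≤ a := minI_le r I a (Finset.mem_insert_of_mem haIn)
    by_cases hcase : m = a
    · have hsig : sig a m = a + 1 := by rw [hcase]; simp [sig]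
      rw [hsig]
      apply minI_eq
      · rcases Finset.mem_insert.mp haI with h | h
        · rw [h]; exact Finset.mem_insert_self r I'
        · exact Finset.mem_insert_of_mem ((hmemI' (a+1)).mpr (Or.inl ⟨h, by omega⟩))
      · intro b hb
        rcases Finset.mem_insert.mp hb with h | h
        · omega
        · rcases (hmemI' b).mp h with ⟨hbI, hba⟩ | ⟨hba, hna⟩
          · have := minI_le r I b (Finset.mem_insert_of_mem hbI); omega
          · exact absurd haIn hna
    · have hmlta : m < a := by omega
      have hmI : m ∈ I := by
        rcases Finset.mem_insert.mp hmmem with h | h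
        · omega
        · exact h
      have hsig : sig a m = m := by unfold sig; rw [if_neg hcase, if_neg (by omega)]
      rw [hsig]
      apply minI_eq
      · exact Finset.mem_insert_of_mem ((hmemI' m).mpr (Or.inl ⟨hmI, hcase⟩))
      · intro b hb
        rcases Finset.mem_insert.mp hb with h | h
        · omega
        · rcases (hmemI' b).mp h with ⟨hbI, _⟩ | ⟨hba, _⟩
          · exact minI_le r I b (Finset.mem_insert_of_mem hbI)
          · omega
  · have hma : m ≤ a + 1 := minI_le r I _ haI
    have hmna : m ≠ a := by
      intro h
      rcases Finset.mem_insert.mp hmmem with h' | h'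
      · omega
      · exact haIn (h ▸ h')
    by_cases hcase : m = a + 1
    · have hsig : sig a m = a := by rw [hcase]; unfold sig; rw [if_neg (by omega), if_pos rfl]
      rw [hsig]
      apply minI_eq
      · exact Finset.mem_insert_of_mem ((hmemI' a).mpr (Or.inr ⟨rfl, haIn⟩))
      · intro b hb
        rcases Finset.mem_insert.mp hb with h | h
        · omega
        · rcases (hmemI' b).mp h with ⟨hbI, _⟩ | ⟨hba, _⟩
          · have := minI_le r I b (Finset.mem_insert_of_mem hbI); omega
          · omega
    · have hmlt : m < a := by omega
      have hmI : m ∈ I := by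
        rcases Finset.mem_insert.mp hmmem with h | h
        · omega
        · exact h
      have hsig : sig a m = m := by unfold sig; rw [if_neg hmna, if_neg hcase]
      rw [hsig]
      apply minI_eq
      · exact Finset.mem_insert_of_mem ((hmemI' m).mpr (Or.inl ⟨hmI, hmna⟩))
      · intro b hb
        rcases Finset.mem_insert.mp hb with h | h
        · omega
        · rcases (hmemI' b).mp h with ⟨hbI, _⟩ | ⟨hba, _⟩
          · exact minI_le r I b (Finset.mem_insert_of_mem hbI)
          · omega

lemma key_pI (r : ℕ) (I : Finset ℕ) (hI : I ⊆ Finset.Icc 1 (r - 1)) (a : ℕ)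
    (ha1 : 1 ≤ a) (ha2 : a ≤ r - 1) (hr : 5 ≤ r) (haI : a + 1 ∈ insert r I)
    (j : ℕ) (hj1 : 1 ≤ j) (hj2 : j ≤ r - 1) :
    pI r (symmDiff I {a}) j = sig a (pI r I j) := by
  have har : a < r := by omega
  have hjr : j < r := by omega
  have hjne : j ≠ r := by omega
  set I' := symmDiff I {a} with hI'def
  have hmemI' : ∀ b, b ∈ I' ↔ ((b ∈ I ∧ b ≠ a) ∨ (b = a ∧ a ∉ I)) := by
    intro b
    simp only [hI'def, Finset.mem_symmDiff, Finset.mem_singleton]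
    constructor
    · rintro (⟨h1, h2⟩ | ⟨h1, h2⟩)
      · exact Or.inl ⟨h1, h2⟩
      · subst h1; exact Or.inr ⟨rfl, h2⟩
    · rintro (⟨h1, h2⟩ | ⟨h1, h2⟩)
      · exact Or.inl ⟨h1, h2⟩
      · subst h1; exact Or.inr ⟨rfl, h2⟩
  have hIr : ∀ b ∈ I, b < r := fun b hb => by
    have := hI hb; simp only [Finset.mem_Icc] at this; omega
  have haI' : a + 1 ∈ insert r I' → True := fun _ => trivial
  by_cases haIn : a ∈ I
  · by_cases hja : j = a
    · subst hja
      have h1 : pI r I j = j + 1 := by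
        rw [pI, if_pos haIn]
        exact nextI_eq r I j (j+1) hjr haI (by omega) (fun b _ h => by omega)
      have h2 : pI r I' j = j := by
        rw [pI, if_neg, if_neg hjne]
        rw [hmemI']
        push_neg
        exact ⟨fun _ => rfl, fun _ => haIn⟩
      rw [h1, h2]
      unfold sig
      rw [if_neg (by omega), if_pos rfl]
    · by_cases hjI : j ∈ I
      · obtain ⟨hnmem, hjn⟩ := nextI_mem_lt r I j hjr
        set n := nextI r I j with hn
        have hpIj : pI r I j = n := by rw [pI, if_pos hjI]
        have hjI' : j ∈ I' := (hmemI' j).mpr (Or.inl ⟨hjI, hja⟩)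
        have hpI'j : pI r I' j = nextI r I' j := by rw [pI, if_pos hjI']
        rw [hpIj, hpI'j]
        by_cases hna : n = a
        · have hsig : sig a n = a + 1 := by rw [hna]; simp [sig]
          rw [hsig]
          apply nextI_eq r I' j (a+1) hjr
          · rcases Finset.mem_insert.mp haI with h | h
            · rw [h]; exact Finset.mem_insert_self r I'
            · exact Finset.mem_insert_of_mem ((hmemI' (a+1)).mpr (Or.inl ⟨h, by omega⟩))
          · omega
          · intro b hb hjb
            rcases Finset.mem_insert.mp hb with h | h
            · omega
            · rcases (hmemI' b).mp h with ⟨hbI, hba⟩ | ⟨hba, hnaI⟩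
              · have := nextI_le r I j b (Finset.mem_insert_of_mem hbI) hjb; omega
              · exact absurd haIn hnaI
        · have hna1 : n ≠ a + 1 := by
            intro h
            by_cases hja' : j < a
            · have := nextI_le r I j a (Finset.mem_insert_of_mem haIn) hja'; omega
            · omega
          have hsig : sig a n = n := by unfold sig; rw [if_neg hna, if_neg hna1]
          rw [hsig]
          apply nextI_eq r I' j n hjr _ hjn
          · intro b hb hjb
            rcases Finset.mem_insert.mp hb with h | h
            · rw [h]; exact nextI_le r I j r (Finset.mem_insert_self r I) (by omega)
            · rcases (hmemI' b).mp h with ⟨hbI, _⟩ | ⟨hba, hnaI⟩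
              · exact nextI_le r I j b (Finset.mem_insert_of_mem hbI) hjb
              · exact absurd haIn hnaI
          · rcases Finset.mem_insert.mp hnmem with h | h
            · rw [h]; exact Finset.mem_insert_self r I'
            · exact Finset.mem_insert_of_mem ((hmemI' n).mpr (Or.inl ⟨h, hna⟩))
      · have hja2 : j ≠ a + 1 := by
          rcases Finset.mem_insert.mp haI with h | h
          · omega
          · intro he; exact hjI (he ▸ h)
        have h1 : pI r I j = j := by rw [pI, if_neg hjI, if_neg hjne]
        have h2 : pI r I' j = j := by
          rw [pI, if_neg, if_neg hjne]
          rw [hmemI']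
          push_neg
          exact ⟨fun h => absurd h hjI, fun _ => haIn⟩
        rw [h1, h2]
        unfold sig
        rw [if_neg hja, if_neg hja2]
  · -- a ∉ I
    by_cases hja : j = a
    · subst hja
      have h1 : pI r I j = j := by rw [pI, if_neg haIn, if_neg hjne]
      have hjI' : j ∈ I' := (hmemI' j).mpr (Or.inr ⟨rfl, haIn⟩)
      have h2 : pI r I' j = nextI r I' j := by rw [pI, if_pos hjI']
      have h3 : nextI r I' j = j + 1 := by
        apply nextI_eq r I' j (j+1) hjr _ (by omega) (fun b _ h => by omega)
        rcases Finset.mem_insert.mp haI with h | h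
        · rw [h]; exact Finset.mem_insert_self r I'
        · exact Finset.mem_insert_of_mem ((hmemI' (j+1)).mpr (Or.inl ⟨h, by omega⟩))
      rw [h1, h2, h3]
      unfold sig
      rw [if_pos rfl]
    · by_cases hjI : j ∈ I
      · obtain ⟨hnmem, hjn⟩ := nextI_mem_lt r I j hjr
        set n := nextI r I j with hn
        have hpIj : pI r I j = n := by rw [pI, if_pos hjI]
        have hjI' : j ∈ I' := (hmemI' j).mpr (Or.inl ⟨hjI, hja⟩)
        have hpI'j : pI r I' j = nextI r I' j := by rw [pI, if_pos hjI']
        have hna : n ≠ a := by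
          intro h
          rcases Finset.mem_insert.mp hnmem with h' | h'
          · omega
          · exact haIn (h ▸ h')
        rw [hpIj, hpI'j]
        by_cases hna1 : n = a + 1
        · have hja' : j < a := by omega
          have hsig : sig a n = a := by rw [hna1]; unfold sig; rw [if_neg (by omega), if_pos rfl]
          rw [hsig]
          apply nextI_eq r I' j a hjr
          · exact Finset.mem_insert_of_mem ((hmemI' a).mpr (Or.inr ⟨rfl, haIn⟩))
          · exact hja'
          · intro b hb hjb
            rcases Finset.mem_insert.mp hb with h | h
            · omega
            · rcases (hmemI' b).mp h with ⟨hbI, _⟩ | ⟨hba, _⟩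
              · have := nextI_le r I j b (Finset.mem_insert_of_mem hbI) hjb; omega
              · omega
        · have hsig : sig a n = n := by unfold sig; rw [if_neg hna, if_neg hna1]
          rw [hsig]
          apply nextI_eq r I' j n hjr _ hjn
          · intro b hb hjb
            rcases Finset.mem_insert.mp hb with h | h
            · rw [h]; exact nextI_le r I j r (Finset.mem_insert_self r I) (by omega)
            · rcases (hmemI' b).mp h with ⟨hbI, _⟩ | ⟨hba, _⟩
              · exact nextI_le r I j b (Finset.mem_insert_of_mem hbI) hjb
              · -- b = a, j < b = a; then n ≤ a+1 and n ∉ {a,a+1} so n < a = b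
                have := nextI_le r I j (a+1) haI (by omega)
                omega
          · rcases Finset.mem_insert.mp hnmem with h | h
            · rw [h]; exact Finset.mem_insert_self r I'
            · exact Finset.mem_insert_of_mem ((hmemI' n).mpr (Or.inl ⟨h, hna⟩))
      · have hja2 : j ≠ a + 1 := by
          rcases Finset.mem_insert.mp haI with h | h
          · omega
          · intro he; exact hjI (he ▸ h)
        have h1 : pI r I j = j := by rw [pI, if_neg hjI, if_neg hjne]
        have h2 : pI r I' j = j := by
          rw [pI, if_neg, if_neg hjne]
          rw [hmemI']
          push_neg
          exact ⟨fun h => absurd h hjI, fun h => absurd h hja⟩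
        rw [h1, h2]
        unfold sig
        rw [if_neg hja, if_neg hja2]

/-! ### Assembly -/

lemma key_cIb (r : ℕ) (I : Finset ℕ) (hI : I ⊆ Finset.Icc 1 (r - 1)) (a : ℕ)
    (ha1 : 1 ≤ a) (ha2 : a ≤ r - 1) (hr : 5 ≤ r) (haI : a + 1 ∈ insert r I)
    (j : ℕ) (hj : j ∈ Finset.Icc 1 r) :
    sw r a (cIb r I j) = cIb r (symmDiff I {a}) j := by
  simp only [Finset.mem_Icc] at hj
  by_cases hjr : j = r
  · rw [cIb, if_pos hjr, cIb, if_pos hjr, sw_ee r a _ ha1 (by omega),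
      key_min r I hI a ha1 ha2 hr haI]
  · rw [cIb, if_neg hjr, cIb, if_neg hjr, sw_neg, sw_ee r a _ ha1 (by omega),
      key_pI r I hI a ha1 ha2 hr haI j hj.1 (by omega)]

lemma sw_cI (r : ℕ) (I I' : Finset ℕ) (a : ℕ)
    (hb : ∀ j ∈ Finset.Icc 1 r, sw r a (cIb r I j) = cIb r I' j) (x : Fin r → ℝ) :
    sw r a (cI r I x) = cI r I' x := by
  rw [cI, sw_sum, cI]
  apply Finset.sum_congr rfl
  intro j hj
  rw [sw_smul, hb j hj]

lemma cI_empty (r : ℕ) (hr : 5 ≤ r) (x : Fin r → ℝ) : cI r ∅ x = w0 r x := by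
  have hmin : minI r (∅ : Finset ℕ) = r := by
    apply minI_eq
    · exact Finset.mem_insert_self r ∅
    · intro b hb
      rcases Finset.mem_insert.mp hb with h | h
      · omega
      · exact absurd h (Finset.notMem_empty b)
  have hcIb : ∀ j, j ≠ r → cIb r (∅ : Finset ℕ) j = -(ee r j) := by
    intro j hj
    rw [cIb, if_neg hj, pI, if_neg (Finset.notMem_empty j), if_neg hj]
  funext k
  rw [cI, Finset.sum_apply]
  have hk1 : 1 ≤ (k : ℕ) + 1 := by omega
  have hk2 : (k : ℕ) + 1 ≤ r := by omega
  rw [Finset.sum_eq_single ((k : ℕ) + 1)]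
  · have hco : coordN r x ((k : ℕ) + 1) = x k := by
      rw [coordN_eq r x _ hk1 hk2]
      congr 1
    by_cases hkr : (k : ℕ) + 1 = r
    · rw [cIb, if_pos hkr, hmin]
      show coordN r x ((k : ℕ) + 1) * ee r r k = w0 r x k
      rw [hco]
      unfold ee w0
      rw [if_pos hkr, if_pos hkr]
      ring
    · rw [hcIb _ hkr]
      show coordN r x ((k : ℕ) + 1) * (-(ee r ((k : ℕ) + 1)) k) = w0 r x k
      rw [hco]
      unfold ee w0
      rw [if_neg hkr]
      simp
  · intro b hb hbk
    simp only [Finset.mem_Icc] at hb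
    have hval : cIb r (∅ : Finset ℕ) b k = 0 := by
      by_cases hbr : b = r
      · rw [cIb, if_pos hbr, hmin]
        unfold ee
        rw [if_neg (by omega)]
      · rw [hcIb _ hbr]
        show -(ee r b) k = 0
        unfold ee
        rw [if_neg (by omega)]
        simp
    show coordN r x b * cIb r (∅ : Finset ℕ) b k = 0
    rw [hval, mul_zero]
  · intro h
    exact absurd (Finset.mem_Icc.mpr ⟨hk1, hk2⟩) h


/-- `s_a c_I = c_{I Δ {a}}` when `a+1 ∈ I` (`1 ≤ a ≤ r-2`), and
`s_{r-1} c_I = c_{I Δ {r-1}}` always, with the convention `c_∅ = w_0`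
(which is built into the definition of `cI` and recorded here). -/
theorem stmt12 (r : ℕ) (hr : 5 ≤ r) (hodd : Odd r)
    (I : Finset ℕ) (hIs : I ⊆ Finset.Icc 1 (r - 1)) :
    (∀ x, cI r (∅ : Finset ℕ) x = w0 r x) ∧
    (∀ a, 1 ≤ a → a ≤ r - 2 → a + 1 ∈ I →
      ∀ x, sw r a (cI r I x) = cI r (symmDiff I {a}) x) ∧
    (∀ x, sw r (r - 1) (cI r I x) = cI r (symmDiff I {r - 1}) x) := by
  refine ⟨cI_empty r hr, ?_, ?_⟩
  · intro a ha1 ha2 haI x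
    exact sw_cI r I (symmDiff I {a}) a
      (key_cIb r I hIs a ha1 (by omega) hr (Finset.mem_insert_of_mem haI)) x
  · intro x
    have h : (r - 1) + 1 = r := by omega
    exact sw_cI r I (symmDiff I {r - 1}) (r - 1)
      (key_cIb r I hIs (r - 1) (by omega) le_rfl hr
        (by rw [h]; exact Finset.mem_insert_self r I)) x

end
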